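/- Let θ be a proper convex piecewise linear function on ℝ^m, let z̄ ∈ dom θ, assume 0 belongs to the affine hull of ∂θ(z̄), and set s := dim S(z̄) ≤ m. Then θ is C^∞-reducible at z̄ via a linear map: there exist an s×m real matrix B of full rank s (so that the linear map z ↦ Bz is surjective onto ℝ^s) with ker B = S(z̄)^⊥, a proper convex piecewise linear function ϑ : ℝ^s → ℝ ∪ {+∞}, and an open neighborhood O of z̄ such that θ(z) = ϑ(Bz) for all z ∈ O. -/

import Mathlib

noncomputable section
open Set Filter Topology Metric
open scoped RealInnerProductSpace Pointwise NNReal Classical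

/-- `Euc m` is the Euclidean space `ℝ^m`. -/
abbrev Euc (m : ℕ) := EuclideanSpace ℝ (Fin m)

variable {F G : Type*} [NormedAddCommGroup F] [InnerProductSpace ℝ F]
  [NormedAddCommGroup G] [InnerProductSpace ℝ G]

/-- The (convex) subdifferential of an extended-real-valued function:
`∂θ(z) = {v : θ(z') ≥ θ(z) + ⟨v, z' - z⟩ for all z'}`. -/
def subdiff (θ : F → EReal) (z : F) : Set F :=
  {v | ∀ z', θ z + ((⟪v, z' - z⟫ : ℝ) : EReal) ≤ θ z'}

/-- The Fréchet (regular) normal cone to `Ω` at `x`: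
vectors `v` with `limsup_{y → x, y ∈ Ω} ⟨v, y - x⟩ / ‖y - x‖ ≤ 0`. -/
def frechetNormal (Ω : Set F) (x : F) : Set F :=
  {v | Filter.limsup (fun y => ⟪v, y - x⟫ / ‖y - x‖) (𝓝[Ω] x) ≤ 0}

/-- The limiting (Mordukhovich) normal cone to `Ω` at `x`. -/
def limitingNormal (Ω : Set F) (x : F) : Set F :=
  {v | ∃ xs vs : ℕ → F, (∀ k, xs k ∈ Ω) ∧ Filter.Tendsto xs Filter.atTop (𝓝 x) ∧
    Filter.Tendsto vs Filter.atTop (𝓝 v) ∧ ∀ k, vs k ∈ frechetNormal Ω (xs k)}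

/-- Pairing into the `ℓ²`-product of two inner product spaces. -/
def pl2 (x : F) (y : G) : WithLp 2 (F × G) := (WithLp.equiv 2 (F × G)).symm (x, y)

/-- The second-order subdifferential (generalized Hessian)
`∂²θ(z,v)(u) = {w : (w,-u) ∈ N((z,v); gph ∂θ)}`. -/
def sosd (θ : F → EReal) (z v : F) (u : F) : Set F :=
  {w | pl2 w (-u) ∈ limitingNormal
    {q : WithLp 2 (F × F) | ((WithLp.equiv 2 (F × F)) q).2 ∈ subdiff θ ((WithLp.equiv 2 (F × F)) q).1}
    (pl2 z v)}

/-- The polyhedral domain `{z : ⟨d i, z⟩ ≤ β i for all i}` of a CPWL function. -/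
def cpwlDom {m p : ℕ} (d : Fin p → Euc m) (β : Fin p → ℝ) : Set (Euc m) :=
  {z | ∀ i, ⟪d i, z⟫ ≤ β i}

/-- The CPWL function determined by the data `(a, α, d, β)`:
`θ(z) = max_i (⟨a i, z⟩ - α i)` on its polyhedral domain and `+∞` outside. -/
def cpwlFun {m l p : ℕ} (a : Fin l → Euc m) (α : Fin l → ℝ) (d : Fin p → Euc m)
    (β : Fin p → ℝ) : Euc m → EReal :=
  fun z => if z ∈ cpwlDom d β then (((⨆ i, (⟪a i, z⟫ - α i)) : ℝ) : EReal) else ⊤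

/-- Active indices of the max expression at `z`. -/
def Kact {m l p : ℕ} (a : Fin l → Euc m) (α : Fin l → ℝ) (d : Fin p → Euc m) (β : Fin p → ℝ)
    (z : Euc m) : Set (Fin l) :=
  {i | cpwlFun a α d β z = ((⟪a i, z⟫ - α i : ℝ) : EReal)}

/-- Active indices of the domain inequalities at `z`. -/
def Iact {m p : ℕ} (d : Fin p → Euc m) (β : Fin p → ℝ) (z : Euc m) : Set (Fin p) :=
  {i | ⟪d i, z⟫ = β i}

/-- Convex conic hull: all finite nonnegative combinations of elements of `s`. -/
def coneHull (s : Set F) : Set F :=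
  {x | ∃ (n : ℕ) (c : Fin n → ℝ) (y : Fin n → F), (∀ i, 0 ≤ c i) ∧ (∀ i, y i ∈ s) ∧
    x = ∑ i, c i • y i}

/-- `Spar θ z` is the linear subspace parallel to the affine hull of `∂θ(z)`. -/
def Spar (θ : F → EReal) (z : F) : Submodule ℝ F := (affineSpan ℝ (subdiff θ z)).direction

/-- A convex polyhedron: a finite intersection of closed halfspaces. -/
def IsPolyhedron {V : Type*} [AddCommGroup V] [Module ℝ V] (C : Set V) : Prop :=
  ∃ (N : ℕ) (f : Fin N → V →ₗ[ℝ] ℝ) (b : Fin N → ℝ), C = {x | ∀ i, f i x ≤ b i}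

/-- A proper convex piecewise linear function with values in `ℝ ∪ {+∞}`:
its epigraph is a convex polyhedron, it never takes the value `-∞`, and it is
not identically `+∞`. -/
def IsCPWL {V : Type*} [AddCommGroup V] [Module ℝ V] (f : V → EReal) : Prop :=
  IsPolyhedron {xt : V × ℝ | f xt.1 ≤ (xt.2 : EReal)} ∧ (∀ x, f x ≠ ⊥) ∧ (∃ x, f x ≠ ⊤)

/-- Local argmin set `M_γ(w,v)` of `x ↦ φ(x,w) - ⟨v,x⟩` over the ball `‖x - xb‖ ≤ γ`,
with the convention that minimizers at which the objective is `+∞` are discarded. -/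
def argminLoc {n d : ℕ} (φ : Euc n → Euc d → EReal) (xb : Euc n) (γ : ℝ) (w : Euc d)
    (v : Euc n) : Set (Euc n) :=
  {x | ‖x - xb‖ ≤ γ ∧ φ x w ≠ ⊤ ∧
    ∀ y, ‖y - xb‖ ≤ γ → φ x w - ((⟪v, x⟫ : ℝ) : EReal) ≤ φ y w - ((⟪v, y⟫ : ℝ) : EReal)}

/-- Local optimal value `m_γ(w,v)` of `x ↦ φ(x,w) - ⟨v,x⟩` over the ball `‖x - xb‖ ≤ γ`. -/
def infLoc {n d : ℕ} (φ : Euc n → Euc d → EReal) (xb : Euc n) (γ : ℝ) (w : Euc d)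
    (v : Euc n) : EReal :=
  ⨅ x ∈ {x : Euc n | ‖x - xb‖ ≤ γ}, (φ x w - ((⟪v, x⟫ : ℝ) : EReal))

/-- `xb` is a fully stable locally optimal solution of
`minimize φ(x,wb) - ⟨vb,x⟩` : for some `γ > 0` and neighborhoods `W × V` of `(wb,vb)`,
the local argmin map is single-valued and Lipschitz with value `xb` at `(wb,vb)`, and the
local optimal value function is finite and Lipschitz. -/
def FullyStableSol {n d : ℕ} (φ : Euc n → Euc d → EReal) (xb : Euc n) (wb : Euc d)
    (vb : Euc n) : Prop :=
  ∃ γ > (0 : ℝ), ∃ W ∈ 𝓝 wb, ∃ V ∈ 𝓝 vb,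
    (∃ σ : Euc d × Euc n → Euc n,
      (∃ K : ℝ≥0, LipschitzOnWith K σ (W ×ˢ V)) ∧
      (∀ w ∈ W, ∀ v ∈ V, argminLoc φ xb γ w v = {σ (w, v)}) ∧ σ (wb, vb) = xb) ∧
    (∃ μ : Euc d × Euc n → ℝ,
      (∃ K : ℝ≥0, LipschitzOnWith K μ (W ×ˢ V)) ∧
      ∀ w ∈ W, ∀ v ∈ V, infLoc φ xb γ w v = ((μ (w, v) : ℝ) : EReal))

/-- The partial limiting subdifferential `∂ₓψ(x,w)` defined through the limiting normal
cone to the epigraph of `ψ(·,w)`. -/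
def partialSubdiffX {n d : ℕ} (ψ : Euc n → Euc d → EReal) (x : Euc n) (w : Euc d) :
    Set (Euc n) :=
  {v | ∃ r : ℝ, ψ x w = (r : EReal) ∧
    pl2 v (-1 : ℝ) ∈ limitingNormal
      {q : WithLp 2 (Euc n × ℝ) |
        ψ ((WithLp.equiv 2 (Euc n × ℝ)) q).1 w ≤ ((((WithLp.equiv 2 (Euc n × ℝ)) q).2 : ℝ) : EReal)}
      (pl2 x r)}

/-- The coderivative `D*∂ₓψ(xb,wb,qb)(u)` of the partial subdifferential mapping,
via the limiting normal cone to its graph in `ℝ^n × ℝ^d × ℝ^n`. -/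
def coderivPartialSubdiffX {n d : ℕ} (ψ : Euc n → Euc d → EReal) (xb : Euc n) (wb : Euc d)
    (qb : Euc n) (u : Euc n) : Set (Euc n × Euc d) :=
  {P | pl2 (pl2 P.1 P.2) (-u) ∈ limitingNormal
    {t : WithLp 2 (WithLp 2 (Euc n × Euc d) × Euc n) |
      ((WithLp.equiv 2 (WithLp 2 (Euc n × Euc d) × Euc n)) t).2 ∈ partialSubdiffX ψ
        ((WithLp.equiv 2 (Euc n × Euc d)) (((WithLp.equiv 2 (WithLp 2 (Euc n × Euc d) × Euc n)) t).1)).1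
        ((WithLp.equiv 2 (Euc n × Euc d)) (((WithLp.equiv 2 (WithLp 2 (Euc n × Euc d) × Euc n)) t).1)).2}
    (pl2 (pl2 xb wb) qb)}

/-- Partial Hessian in `x` : the derivative in `x` of the partial gradient in `x`. -/
def hessXX {n d : ℕ} (g : Euc n → Euc d → ℝ) (xb : Euc n) (wb : Euc d) : Euc n →L[ℝ] Euc n :=
  fderiv ℝ (fun x => gradient (fun x' => g x' wb) x) xb

/-- Mixed partial Hessian: derivative in `w` of the partial gradient in `x`. -/
def hessWX {n d : ℕ} (g : Euc n → Euc d → ℝ) (xb : Euc n) (wb : Euc d) : Euc d →L[ℝ] Euc n :=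
  fderiv ℝ (fun w => gradient (fun x' => g x' w) xb) wb

/-!
Near `zb` only the active pieces `a i` (`i ∈ Kact`) and the active constraints `d j`
(`j ∈ Iact`) matter, so `θ(z) = θ(zb + P (z - zb))` for any orthogonal projection `P` onto a
subspace containing these vectors. Each active `a i`, and `a i + d j` for active `j`, is a
subgradient at `zb`; since `0 ∈ aff ∂θ(zb)`, the whole subdifferential lies in `S(zb)`, which
therefore contains all the active data. Writing the projection onto `S(zb)` as `B† B`, with `B`
the coordinates in an orthonormal basis of `S(zb)`, exhibits `θ` near `zb` as the CPWL function
`y ↦ θ(B† y + zb - P zb)` evaluated at `B z`.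
-/

section OrthogonalCoords

variable {E : Type*} [NormedAddCommGroup E] [InnerProductSpace ℝ E] [FiniteDimensional ℝ E]
  (K : Submodule ℝ E)

def orthogonalCoords : E →ₗ[ℝ] EuclideanSpace ℝ (Fin (Module.finrank ℝ K)) :=
  (stdOrthonormalBasis ℝ K).repr.toLinearMap ∘ₗ K.orthogonalProjectionOnto.toLinearMap

lemma orthogonalCoords_apply (z : E) :
    orthogonalCoords K z = (stdOrthonormalBasis ℝ K).repr (K.orthogonalProjectionOnto z) :=
  rfl

lemma orthogonalCoords_surjective : Function.Surjective (orthogonalCoords K) := fun y =>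
  ⟨(stdOrthonormalBasis ℝ K).repr.symm y, by simp [orthogonalCoords_apply]⟩

lemma ker_orthogonalCoords : LinearMap.ker (orthogonalCoords K) = Kᗮ := by
  ext z
  simp [orthogonalCoords_apply, ← Submodule.orthogonalProjectionOnto_eq_zero_iff]

lemma adjoint_orthogonalCoords_apply (z : E) :
    (orthogonalCoords K).adjoint (orthogonalCoords K z) = K.starProjection z := by
  refine ext_inner_right ℝ fun w => ?_
  rw [LinearMap.adjoint_inner_left, orthogonalCoords_apply, orthogonalCoords_apply,
    LinearIsometryEquiv.inner_map_map, Submodule.coe_inner, ← Submodule.starProjection_apply,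
    ← Submodule.starProjection_apply, ← Submodule.inner_starProjection_left_eq_right,
    Submodule.starProjection_eq_self_iff.2 (K.starProjection_apply_mem z)]

end OrthogonalCoords

lemma isPolyhedron_inter {V : Type*} [AddCommGroup V] [Module ℝ V] {C D : Set V}
    (hC : IsPolyhedron C) (hD : IsPolyhedron D) : IsPolyhedron (C ∩ D) := by
  obtain ⟨N, f, b, rfl⟩ := hC
  obtain ⟨N', f', b', rfl⟩ := hD
  refine ⟨N + N', Fin.append f f', Fin.append b b', ?_⟩
  ext x
  simp [Fin.forall_fin_add]

lemma subdiff_subset_Spar {θ : F → EReal} {z : F}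
    (h0 : (0 : F) ∈ affineSpan ℝ (subdiff θ z)) : subdiff θ z ⊆ Spar θ z := fun v hv => by
  simpa [Spar] using AffineSubspace.vsub_mem_direction (subset_affineSpan ℝ _ hv) h0

section CPWL

variable {m l p : ℕ} {a : Fin l → Euc m} {α : Fin l → ℝ} {d : Fin p → Euc m} {β : Fin p → ℝ}

lemma cpwlFun_of_mem {z : Euc m} (hz : z ∈ cpwlDom d β) :
    cpwlFun a α d β z = ((⨆ i, ⟪a i, z⟫ - α i : ℝ) : EReal) :=
  if_pos hz

lemma cpwlFun_of_notMem {z : Euc m} (hz : z ∉ cpwlDom d β) : cpwlFun a α d β z = ⊤ :=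
  if_neg hz

lemma le_iSup_cpwl_pieces (z : Euc m) (i : Fin l) :
    ⟪a i, z⟫ - α i ≤ ⨆ i', ⟪a i', z⟫ - α i' :=
  le_ciSup (f := fun i' => ⟪a i', z⟫ - α i') (Set.finite_range _).bddAbove i

lemma cpwlFun_le_coe_iff [Nonempty (Fin l)] {z : Euc m} {t : ℝ} :
    cpwlFun a α d β z ≤ t ↔ (∀ i, ⟪a i, z⟫ - α i ≤ t) ∧ z ∈ cpwlDom d β := by
  by_cases hz : z ∈ cpwlDom d β
  · rw [cpwlFun_of_mem hz, EReal.coe_le_coe_iff, ciSup_le_iff (Set.finite_range _).bddAbove]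
    exact (and_iff_left hz).symm
  · simp [cpwlFun_of_notMem hz, hz]

lemma isCPWL_cpwlFun [Nonempty (Fin l)] (hdom : (cpwlDom d β).Nonempty) :
    IsCPWL (cpwlFun a α d β) := by
  refine ⟨?_, fun z => ?_, ?_⟩
  · have hepi : {zt : Euc m × ℝ | cpwlFun a α d β zt.1 ≤ (zt.2 : EReal)} =
        {zt | ∀ i, (innerₛₗ ℝ (a i) ∘ₗ LinearMap.fst ℝ (Euc m) ℝ - LinearMap.snd ℝ (Euc m) ℝ) zt
            ≤ α i} ∩ {zt | ∀ j, (innerₛₗ ℝ (d j) ∘ₗ LinearMap.fst ℝ (Euc m) ℝ) zt ≤ β j} := by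
      ext zt
      simp [cpwlFun_le_coe_iff, cpwlDom, add_comm]
    rw [hepi]
    exact isPolyhedron_inter ⟨_, _, _, rfl⟩ ⟨_, _, _, rfl⟩
  · by_cases hz : z ∈ cpwlDom d β
    · simp [cpwlFun_of_mem hz]
    · simp [cpwlFun_of_notMem hz]
  · obtain ⟨z, hz⟩ := hdom
    exact ⟨z, by simp [cpwlFun_of_mem hz]⟩

lemma inner_map_add_eq_inner_adjoint {s : ℕ} (A : Euc s →ₗ[ℝ] Euc m) (c v : Euc m) (y : Euc s) :
    ⟪v, A y + c⟫ = ⟪A.adjoint v, y⟫ + ⟪v, c⟫ := by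
  rw [inner_add_right, LinearMap.adjoint_inner_left]

lemma mem_cpwlDom_map_add_iff {s : ℕ} (A : Euc s →ₗ[ℝ] Euc m) (c : Euc m) {y : Euc s} :
    A y + c ∈ cpwlDom d β ↔
      y ∈ cpwlDom (fun j => A.adjoint (d j)) (fun j => β j - ⟪d j, c⟫) := by
  simp only [cpwlDom, Set.mem_ofPred_eq, inner_map_add_eq_inner_adjoint, le_sub_iff_add_le]

lemma cpwlFun_map_add {s : ℕ} (A : Euc s →ₗ[ℝ] Euc m) (c : Euc m) (y : Euc s) :
    cpwlFun a α d β (A y + c) =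
      cpwlFun (fun i => A.adjoint (a i)) (fun i => α i - ⟪a i, c⟫)
        (fun j => A.adjoint (d j)) (fun j => β j - ⟪d j, c⟫) y := by
  by_cases hy : A y + c ∈ cpwlDom d β
  · rw [cpwlFun_of_mem hy, cpwlFun_of_mem ((mem_cpwlDom_map_add_iff A c).1 hy)]
    simp only [inner_map_add_eq_inner_adjoint, sub_sub_eq_add_sub, add_sub_assoc]
  · rw [cpwlFun_of_notMem hy, cpwlFun_of_notMem (mt (mem_cpwlDom_map_add_iff A c).2 hy)]

lemma isCPWL_cpwlFun_map_add [Nonempty (Fin l)] {s : ℕ} (A : Euc s →ₗ[ℝ] Euc m) (c : Euc m)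
    {y₀ : Euc s} (hy₀ : A y₀ + c ∈ cpwlDom d β) :
    IsCPWL fun y => cpwlFun a α d β (A y + c) := by
  simp only [cpwlFun_map_add A c]
  exact isCPWL_cpwlFun ⟨y₀, (mem_cpwlDom_map_add_iff A c).1 hy₀⟩

lemma mem_Kact_iff {z : Euc m} (hz : z ∈ cpwlDom d β) {i : Fin l} :
    i ∈ Kact a α d β z ↔ ⟪a i, z⟫ - α i = ⨆ i', ⟪a i', z⟫ - α i' := by
  rw [Kact, Set.mem_ofPred_eq, cpwlFun_of_mem hz, EReal.coe_eq_coe_iff, eq_comm]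

lemma Kact_nonempty [Nonempty (Fin l)] {z : Euc m} (hz : z ∈ cpwlDom d β) :
    (Kact a α d β z).Nonempty := by
  obtain ⟨i, hi⟩ := exists_eq_ciSup_of_finite (f := fun i => ⟪a i, z⟫ - α i)
  exact ⟨i, (mem_Kact_iff hz).2 hi⟩

lemma add_mem_subdiff_cpwlFun {zb u : Euc m} (hzb : zb ∈ cpwlDom d β) {i : Fin l}
    (hi : i ∈ Kact a α d β zb) (hu : ∀ z ∈ cpwlDom d β, ⟪u, z - zb⟫ ≤ 0) :
    a i + u ∈ subdiff (cpwlFun a α d β) zb := by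
  intro z
  by_cases hz : z ∈ cpwlDom d β
  · rw [cpwlFun_of_mem hzb, cpwlFun_of_mem hz, ← EReal.coe_add, EReal.coe_le_coe_iff,
      ← (mem_Kact_iff hzb).1 hi, inner_add_left, inner_sub_right]
    linarith [hu z hz, le_iSup_cpwl_pieces (a := a) (α := α) z i]
  · simp [cpwlFun_of_notMem hz]

lemma mem_Spar_of_mem_Kact {zb : Euc m} (hzb : zb ∈ cpwlDom d β)
    (h0 : (0 : Euc m) ∈ affineSpan ℝ (subdiff (cpwlFun a α d β) zb)) {i : Fin l}
    (hi : i ∈ Kact a α d β zb) : a i ∈ Spar (cpwlFun a α d β) zb := by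
  simpa using subdiff_subset_Spar h0 (add_mem_subdiff_cpwlFun hzb hi (u := 0) (by simp))

lemma mem_Spar_of_mem_Iact [Nonempty (Fin l)] {zb : Euc m} (hzb : zb ∈ cpwlDom d β)
    (h0 : (0 : Euc m) ∈ affineSpan ℝ (subdiff (cpwlFun a α d β) zb)) {j : Fin p}
    (hj : j ∈ Iact d β zb) : d j ∈ Spar (cpwlFun a α d β) zb := by
  obtain ⟨i, hi⟩ := Kact_nonempty (a := a) (α := α) hzb
  have hnormal : ∀ z ∈ cpwlDom d β, ⟪d j, z - zb⟫ ≤ 0 := fun z hz => by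
    rw [inner_sub_right, hj]
    linarith [hz j]
  simpa using Submodule.sub_mem _ (subdiff_subset_Spar h0 (add_mem_subdiff_cpwlFun hzb hi hnormal))
    (mem_Spar_of_mem_Kact hzb h0 hi)

lemma exists_mem_nhds_cpwlFun_eq_of_active_inner_eq [Nonempty (Fin l)] {zb : Euc m}
    (hzb : zb ∈ cpwlDom d β) :
    ∃ O ∈ 𝓝 zb, ∀ z ∈ O, ∀ z' ∈ O, (∀ i ∈ Kact a α d β zb, ⟪a i, z⟫ = ⟪a i, z'⟫) →
      (∀ j ∈ Iact d β zb, ⟪d j, z⟫ = ⟪d j, z'⟫) → cpwlFun a α d β z = cpwlFun a α d β z' := by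
  obtain ⟨i₀, hi₀⟩ := Kact_nonempty (a := a) (α := α) hzb
  have hcont : ∀ v : Euc m, Continuous fun z => ⟪v, z⟫ := fun v => continuous_const.inner continuous_id
  set O := {z | (∀ j ∉ Iact d β zb, ⟪d j, z⟫ < β j) ∧
    ∀ i ∉ Kact a α d β zb, ⟪a i, z⟫ - α i < ⟪a i₀, z⟫ - α i₀}
  have hO : O ∈ 𝓝 zb := by
    refine (eventually_all.2 fun j => ?_).and (eventually_all.2 fun i => ?_)
    · refine eventually_imp_distrib_left.2 fun hj => ?_
      exact (hcont _).continuousAt.eventually_lt continuousAt_const ((hzb j).lt_of_ne hj)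
    · refine eventually_imp_distrib_left.2 fun hi => ?_
      refine ((hcont _).sub continuous_const).continuousAt.eventually_lt
        ((hcont _).sub continuous_const).continuousAt ?_
      rw [(mem_Kact_iff hzb).1 hi₀]
      exact (le_iSup_cpwl_pieces zb i).lt_of_ne (mt (mem_Kact_iff hzb).2 hi)
  have hle : ∀ z ∈ O, ∀ z' ∈ O, (∀ i ∈ Kact a α d β zb, ⟪a i, z⟫ = ⟪a i, z'⟫) →
      (∀ j ∈ Iact d β zb, ⟪d j, z⟫ = ⟪d j, z'⟫) → cpwlFun a α d β z ≤ cpwlFun a α d β z' := by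
    intro z hz z' hz' ha hd
    by_cases hdom' : z' ∈ cpwlDom d β
    · rw [cpwlFun_of_mem hdom', cpwlFun_le_coe_iff]
      refine ⟨fun i => ?_, fun j => ?_⟩
      · by_cases hi : i ∈ Kact a α d β zb
        · rw [ha i hi]
          exact le_iSup_cpwl_pieces z' i
        · calc ⟪a i, z⟫ - α i ≤ ⟪a i₀, z⟫ - α i₀ := (hz.2 i hi).le
            _ = ⟪a i₀, z'⟫ - α i₀ := by rw [ha i₀ hi₀]
            _ ≤ _ := le_iSup_cpwl_pieces z' i₀
      · by_cases hj : j ∈ Iact d β zb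
        · exact (hd j hj).trans_le (hdom' j)
        · exact (hz.1 j hj).le
    · simp [cpwlFun_of_notMem hdom']
  exact ⟨O, hO, fun z hz z' hz' ha hd =>
    (hle z hz z' hz' ha hd).antisymm (hle z' hz' z hz (fun i hi => (ha i hi).symm)
      fun j hj => (hd j hj).symm)⟩

lemma eventually_cpwlFun_eq_starProjection [Nonempty (Fin l)] {zb : Euc m}
    (hzb : zb ∈ cpwlDom d β) (K : Submodule ℝ (Euc m)) (haK : ∀ i ∈ Kact a α d β zb, a i ∈ K)
    (hdK : ∀ j ∈ Iact d β zb, d j ∈ K) :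
    ∀ᶠ z in 𝓝 zb, cpwlFun a α d β z = cpwlFun a α d β (zb + K.starProjection (z - zb)) := by
  obtain ⟨O, hO, hOeq⟩ := exists_mem_nhds_cpwlFun_eq_of_active_inner_eq (a := a) (α := α) hzb
  have hproj : Tendsto (fun z => zb + K.starProjection (z - zb)) (𝓝 zb) (𝓝 zb) := by
    have hcont : Continuous fun z => zb + K.starProjection (z - zb) := by fun_prop
    simpa using hcont.tendsto zb
  have hinner : ∀ v ∈ K, ∀ z, ⟪v, z⟫ = ⟪v, zb + K.starProjection (z - zb)⟫ := fun v hv z => by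
    rw [inner_add_right, ← Submodule.inner_starProjection_left_eq_right,
      K.starProjection_eq_self_iff.2 hv, inner_sub_right, add_sub_cancel]
  filter_upwards [hO, hproj hO] with z hz hz'
  exact hOeq z hz _ hz' (fun i hi => hinner _ (haK i hi) z) fun j hj => hinner _ (hdK j hj) z

end CPWL

theorem cpwl_reducible_linear_general {m l p : ℕ} (hl : 0 < l)
    (a : Fin l → Euc m) (α : Fin l → ℝ) (d : Fin p → Euc m) (β : Fin p → ℝ)
    (zb : Euc m) (hzb : zb ∈ cpwlDom d β)
    (h0 : (0 : Euc m) ∈ affineSpan ℝ (subdiff (cpwlFun a α d β) zb)) :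
    Module.finrank ℝ (Spar (cpwlFun a α d β) zb) ≤ m ∧
    ∃ B : Euc m →ₗ[ℝ] Euc (Module.finrank ℝ (Spar (cpwlFun a α d β) zb)),
      Function.Surjective B ∧
      LinearMap.ker B = (Spar (cpwlFun a α d β) zb)ᗮ ∧
      ∃ ϑ : Euc (Module.finrank ℝ (Spar (cpwlFun a α d β) zb)) → EReal,
        IsCPWL ϑ ∧
        ∃ O : Set (Euc m), IsOpen O ∧ zb ∈ O ∧ ∀ z ∈ O, cpwlFun a α d β z = ϑ (B z) := by
  have : Nonempty (Fin l) := ⟨⟨0, hl⟩⟩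
  set S := Spar (cpwlFun a α d β) zb
  set B := orthogonalCoords S
  set c := zb - S.starProjection zb
  have hBc : ∀ z, B.adjoint (B z) + c = zb + S.starProjection (z - zb) := fun z => by
    rw [adjoint_orthogonalCoords_apply, map_sub, add_sub_left_comm]
  have hlocal : {z | cpwlFun a α d β z = cpwlFun a α d β (B.adjoint (B z) + c)} ∈ 𝓝 zb := by
    filter_upwards [eventually_cpwlFun_eq_starProjection hzb S
      (fun i hi => mem_Spar_of_mem_Kact hzb h0 hi) fun j hj => mem_Spar_of_mem_Iact hzb h0 hj]
      with z hz
    rw [hBc]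
    exact hz
  obtain ⟨O, hOsub, hO, hzbO⟩ := _root_.mem_nhds_iff.1 hlocal
  exact ⟨(Submodule.finrank_le S).trans_eq (finrank_euclideanSpace_fin), B,
    orthogonalCoords_surjective S, ker_orthogonalCoords S,
    fun y => cpwlFun a α d β (B.adjoint y + c),
    isCPWL_cpwlFun_map_add _ c (y₀ := B zb) (by simpa [hBc] using hzb),
    O, hO, hzbO, fun z hz => hOsub hz⟩

/-- `C^∞`-reducibility of CPWL functions via a linear map: if
`0 ∈ aff ∂θ(zb)` and `s := dim S(zb)`, then `s ≤ m` and there exist a surjective (full rank)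
linear map `B : ℝ^m → ℝ^s` with `ker B = S(zb)^⊥`, a proper CPWL function `ϑ : ℝ^s → ℝ ∪ {+∞}`
and an open neighborhood `O` of `zb` with `θ(z) = ϑ(Bz)` on `O`. -/
theorem cpwl_reducible_linear {m l p : ℕ} (hl : 0 < l)
    (a : Fin l → Euc m) (α : Fin l → ℝ) (d : Fin p → Euc m) (β : Fin p → ℝ)
    (hdom : (cpwlDom d β).Nonempty) (zb : Euc m) (hzb : zb ∈ cpwlDom d β)
    (h0 : (0 : Euc m) ∈ affineSpan ℝ (subdiff (cpwlFun a α d β) zb)) :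
    Module.finrank ℝ (Spar (cpwlFun a α d β) zb) ≤ m ∧
    ∃ B : Euc m →ₗ[ℝ] Euc (Module.finrank ℝ (Spar (cpwlFun a α d β) zb)),
      Function.Surjective B ∧
      LinearMap.ker B = (Spar (cpwlFun a α d β) zb)ᗮ ∧
      ∃ ϑ : Euc (Module.finrank ℝ (Spar (cpwlFun a α d β) zb)) → EReal,
        IsCPWL ϑ ∧
        ∃ O : Set (Euc m), IsOpen O ∧ zb ∈ O ∧ ∀ z ∈ O, cpwlFun a α d β z = ϑ (B z) :=
  cpwl_reducible_linear_general hl a α d β zb hzb h0
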